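/- arXiv:1801.09806 — 7 statements merged into one kernel-verified Lean document; each statement's English description precedes it below -/
import Mathlib

section
/- Let Y, Z be Banach spaces, A† : Z → Y an injective bounded linear operator, X ⊆ Y convex, closed and bounded, U ⊇ X open, f : U → Z Fréchet differentiable, and T(x) := x − A†(f(x)). Fix x̄ ∈ X and define K(X, x̄) := x̄ − A†(f(x̄)) + closedConvexHull { (I − A†∘Df(x₁))(x₂ − x̄) : x₁, x₂ ∈ X }. Then for every x ∈ X, T(x) ∈ K(X, x̄). -/
/-!
Along the segment `γ t = x̄ + t • (x - x̄)`, which stays in `X` by convexity, the map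
`g t = γ t - A (f (γ t))` has derivative `(x - x̄) - A (Df (γ t) (x - x̄))`, an element of the
generating set of `K(X, x̄)`, and `T x - T x̄ = g 1 - g 0`. A vector-valued mean value theorem
finishes: if `g 1 - g 0` were outside the closed convex hull of the derivatives, a separating
functional `φ` would contradict the scalar mean value theorem for `φ ∘ g`.
-/

open Set

theorem sub_mem_closure_convexHull_of_hasDerivAt
    {E : Type*} [NormedAddCommGroup E] [NormedSpace ℝ E]
    {g g' : ℝ → E} {s : Set E} (hgc : ContinuousOn g (Icc 0 1))
    (hg : ∀ t ∈ Ioo (0 : ℝ) 1, HasDerivAt g (g' t) t) (hs : ∀ t ∈ Ioo (0 : ℝ) 1, g' t ∈ s) :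
    g 1 - g 0 ∈ closure (convexHull ℝ s) := by
  by_contra hmem
  obtain ⟨φ, u, hφs, hφ⟩ :=
    geometric_hahn_banach_closed_point (convex_convexHull ℝ s).closure isClosed_closure hmem
  obtain ⟨t, ht, hslope⟩ := exists_hasDerivAt_eq_slope (fun t => φ (g t)) (fun t => φ (g' t))
    zero_lt_one (φ.continuous.comp_continuousOn hgc)
    fun t ht => φ.hasFDerivAt.comp_hasDerivAt t (hg t ht)
  have hφg' : φ (g' t) < u := hφs _ (subset_closure (subset_convexHull ℝ s (hs t ht)))
  rw [sub_zero, div_one, ← map_sub] at hslope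
  linarith

theorem krawczyk_T_mem_general
    {Y Z : Type*} [NormedAddCommGroup Y] [NormedSpace ℝ Y]
    [NormedAddCommGroup Z] [NormedSpace ℝ Z]
    (A : Z →L[ℝ] Y)
    (X : Set Y) (hXconv : Convex ℝ X)
    (U : Set Y) (hXU : X ⊆ U)
    (f : Y → Z) (Df : Y → (Y →L[ℝ] Z))
    (hf : ∀ x ∈ U, HasFDerivAt f (Df x) x)
    (xb : Y) (hxb : xb ∈ X)
    (x : Y) (hx : x ∈ X) :
    (x - A (f x)) - (xb - A (f xb)) ∈
      closure (convexHull ℝ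
        {y : Y | ∃ x₁ ∈ X, ∃ x₂ ∈ X, y = (x₂ - xb) - A (Df x₁ (x₂ - xb))}) := by
  set γ : ℝ → Y := fun t => xb + t • (x - xb)
  have hγX : ∀ t ∈ Icc (0 : ℝ) 1, γ t ∈ X := fun t ht => hXconv.add_smul_sub_mem hxb hx ht
  have hγ : ∀ t : ℝ, HasDerivAt γ (x - xb) t := fun t => by
    simpa [γ] using ((hasDerivAt_id t).smul_const (x - xb)).const_add xb
  set g : ℝ → Y := fun t => γ t - A (f (γ t))
  have hg : ∀ t ∈ Icc (0 : ℝ) 1, HasDerivAt g ((x - xb) - A (Df (γ t) (x - xb))) t :=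
    fun t ht => (hγ t).sub (A.hasFDerivAt.comp_hasDerivAt t
      ((hf (γ t) (hXU (hγX t ht))).comp_hasDerivAt t (hγ t)))
  have hT : (x - A (f x)) - (xb - A (f xb)) = g 1 - g 0 := by simp [g, γ]
  rw [hT]
  exact sub_mem_closure_convexHull_of_hasDerivAt
    (fun t ht => (hg t ht).continuousAt.continuousWithinAt)
    (fun t ht => hg t (Ioo_subset_Icc_self ht))
    fun t ht => ⟨γ t, hγX t (Ioo_subset_Icc_self ht), x, hx, rfl⟩

/-- Krawczyk operator in Banach spaces: T(x) ∈ K(X, x̄) for every x ∈ X. -/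
theorem krawczyk_T_mem
    {Y Z : Type*} [NormedAddCommGroup Y] [NormedSpace ℝ Y] [CompleteSpace Y]
    [NormedAddCommGroup Z] [NormedSpace ℝ Z] [CompleteSpace Z]
    (A : Z →L[ℝ] Y) (hA : Function.Injective A)
    (X : Set Y) (hXconv : Convex ℝ X) (hXclosed : IsClosed X)
    (hXbdd : Bornology.IsBounded X)
    (U : Set Y) (hU : IsOpen U) (hXU : X ⊆ U)
    (f : Y → Z) (Df : Y → (Y →L[ℝ] Z))
    (hf : ∀ x ∈ U, HasFDerivAt f (Df x) x)
    (xb : Y) (hxb : xb ∈ X)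
    (x : Y) (hx : x ∈ X) :
    (x - A (f x)) - (xb - A (f xb)) ∈
      closure (convexHull ℝ
        {y : Y | ∃ x₁ ∈ X, ∃ x₂ ∈ X, y = (x₂ - xb) - A (Df x₁ (x₂ - xb))}) :=
  krawczyk_T_mem_general A X hXconv U hXU f Df hf xb hxb x hx
end

section
/- With the setup of the Krawczyk operator in Banach spaces: if x̂ ∈ X and f(x̂) = 0, then x̂ ∈ K(X, x̄). -/
/-- Krawczyk operator in Banach spaces: any zero of f in X lies in K(X, x̄). -/
theorem krawczyk_zero_mem
    {Y Z : Type*} [NormedAddCommGroup Y] [NormedSpace ℝ Y] [CompleteSpace Y]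
    [NormedAddCommGroup Z] [NormedSpace ℝ Z] [CompleteSpace Z]
    (A : Z →L[ℝ] Y) (hA : Function.Injective A)
    (X : Set Y) (hXconv : Convex ℝ X) (hXclosed : IsClosed X)
    (hXbdd : Bornology.IsBounded X)
    (U : Set Y) (hU : IsOpen U) (hXU : X ⊆ U)
    (f : Y → Z) (Df : Y → (Y →L[ℝ] Z))
    (hf : ∀ x ∈ U, HasFDerivAt f (Df x) x)
    (xb : Y) (hxb : xb ∈ X)
    (xh : Y) (hxh : xh ∈ X) (hzero : f xh = 0) :
    xh - (xb - A (f xb)) ∈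
      closure (convexHull ℝ
        {y : Y | ∃ x₁ ∈ X, ∃ x₂ ∈ X, y = (x₂ - xb) - A (Df x₁ (x₂ - xb))}) := by
  set S : Set Y := {y : Y | ∃ x₁ ∈ X, ∃ x₂ ∈ X, y = (x₂ - xb) - A (Df x₁ (x₂ - xb))}
  by_contra hv
  obtain ⟨L, u, hLs, hLv⟩ :=
    geometric_hahn_banach_closed_point ((convex_convexHull ℝ S).closure) isClosed_closure hv
  -- the segment from xb to xh
  set c : ℝ → Y := fun t => xb + t • (xh - xb) with hc_def
  have hcmem : ∀ t ∈ Set.Icc (0 : ℝ) 1, c t ∈ X := by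
    intro t ht
    have := hXconv hxb hxh (a := 1 - t) (b := t) (by linarith [ht.2]) ht.1 (by ring)
    have hceq : c t = (1 - t) • xb + t • xh := by
      simp only [hc_def, smul_sub, sub_smul, one_smul]
      abel
    rw [hceq]; exact this
  have hcderiv : ∀ t : ℝ, HasDerivAt c (xh - xb) t := by
    intro t
    have h1 : HasDerivAt (fun t : ℝ => t • (xh - xb)) ((1 : ℝ) • (xh - xb)) t :=
      (hasDerivAt_id t).smul_const (xh - xb)
    rw [one_smul] at h1
    exact h1.const_add xb
  -- the scalar function along the segment
  set ψ : ℝ → ℝ := fun t => t * L (xh - xb) - L (A (f (c t))) with hψ_def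
  have hψderiv : ∀ t : ℝ, c t ∈ X →
      HasDerivAt ψ (L ((xh - xb) - A (Df (c t) (xh - xb)))) t := by
    intro t ht
    have hfd : HasFDerivAt f (Df (c t)) (c t) := hf _ (hXU ht)
    have h2 : HasFDerivAt (fun y => L (A (f y))) ((L.comp A).comp (Df (c t))) (c t) :=
      (L.comp A).hasFDerivAt.comp _ hfd
    have h3 : HasDerivAt (fun t => L (A (f (c t))))
        ((L.comp A) (Df (c t) (xh - xb))) t := h2.comp_hasDerivAt t (hcderiv t)
    have h4 : HasDerivAt (fun t : ℝ => t * L (xh - xb)) (L (xh - xb)) t :=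
      hasDerivAt_mul_const _
    have h5 := h4.sub h3
    refine h5.congr_deriv ?_
    simp [map_sub]
  have hψdiff : ∀ t ∈ Set.Icc (0 : ℝ) 1, DifferentiableAt ℝ ψ t := fun t ht =>
    (hψderiv t (hcmem t ht)).differentiableAt
  have hcont : ContinuousOn ψ (Set.Icc 0 1) := fun t ht =>
    (hψdiff t ht).continuousAt.continuousWithinAt
  have hdiffOn : DifferentiableOn ℝ ψ (interior (Set.Icc (0 : ℝ) 1)) := fun t ht =>
    (hψdiff t (interior_subset ht)).differentiableWithinAt
  have hbound : ∀ t ∈ interior (Set.Icc (0 : ℝ) 1), deriv ψ t ≤ u := by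
    intro t ht
    have htX : c t ∈ X := hcmem t (interior_subset ht)
    have hderiv := hψderiv t htX
    rw [hderiv.deriv]
    have hmemS : (xh - xb) - A (Df (c t) (xh - xb)) ∈ S :=
      ⟨c t, htX, xh, hxh, rfl⟩
    exact le_of_lt (hLs _ (subset_closure (subset_convexHull ℝ S hmemS)))
  have hmv := (convex_Icc (0 : ℝ) 1).image_sub_le_mul_sub_of_deriv_le hcont hdiffOn hbound
      0 (by norm_num) 1 (by norm_num) (by norm_num)
  have hψ1 : ψ 1 = L (xh - xb) := by
    simp [hψ_def, hc_def, hzero]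
  have hψ0 : ψ 0 = - L (A (f xb)) := by
    simp [hψ_def, hc_def]
  have hLval : L (xh - (xb - A (f xb))) = ψ 1 - ψ 0 := by
    rw [hψ1, hψ0, map_sub, map_sub, map_sub]
    ring
  rw [hLval] at hLv
  linarith [hmv]
end

section
/- With the setup of the Krawczyk operator in Banach spaces: if K(X, x̄) ⊆ X and there exists 0 ≤ λ < 1 such that {(I − A†∘Df(x₁))(x₂ − x̄) : x₁, x₂ ∈ X} ⊆ λ · (X − x̄), then there exists a unique x̂ ∈ X with f(x̂) = 0. -/
open Set Pointwise

/-- Mean value theorem, membership version: if `g` has derivative `g' t` on `[0,1]`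
and all derivatives lie in a closed convex set `C`, then `g 1 - g 0 ∈ C`. -/
lemma mvt_mem_aux {Y : Type*} [NormedAddCommGroup Y] [NormedSpace ℝ Y]
    {C : Set Y} (hCconv : Convex ℝ C) (hCcl : IsClosed C)
    {g g' : ℝ → Y}
    (hg : ∀ t ∈ Icc (0:ℝ) 1, HasDerivWithinAt g (g' t) (Icc 0 1) t)
    (hmem : ∀ t ∈ Icc (0:ℝ) 1, g' t ∈ C) :
    g 1 - g 0 ∈ C := by
  by_contra hout
  obtain ⟨φ, u, hlt, hgt⟩ := geometric_hahn_banach_closed_point hCconv hCcl hout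
  have key : MonotoneOn (fun t => u * t - φ (g t)) (Icc (0:ℝ) 1) := by
    apply monotoneOn_of_hasDerivWithinAt_nonneg (convex_Icc 0 1)
      (f' := fun t => u - φ (g' t))
    · exact Continuous.continuousOn (by fun_prop) |>.sub
        (φ.continuous.comp_continuousOn fun t ht => (hg t ht).continuousWithinAt)
    · intro t ht
      rw [interior_Icc] at ht
      have h1 : HasDerivWithinAt (fun t : ℝ => u * t) u (Ioo 0 1) t :=
        (hasDerivAt_mul_const u).hasDerivWithinAt.congr (by intro x _; ring) (by ring)
      have h2 : HasDerivWithinAt (fun t => φ (g t)) (φ (g' t)) (Ioo 0 1) t :=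
        (φ.hasFDerivAt.comp_hasDerivWithinAt t
          ((hg t (Ioo_subset_Icc_self ht)).mono Ioo_subset_Icc_self))
      rw [interior_Icc]
      exact h1.sub h2
    · intro t ht
      rw [interior_Icc] at ht
      have := hlt _ (hmem t (Ioo_subset_Icc_self ht))
      linarith
  have h01 := key (left_mem_Icc.2 zero_le_one) (right_mem_Icc.2 zero_le_one) zero_le_one
  simp only [map_sub] at hgt
  simp only [mul_zero, mul_one] at h01
  linarith

/-- Segment mean value theorem for the Newton-type map. -/
lemma seg_mem_aux {Y Z : Type*} [NormedAddCommGroup Y] [NormedSpace ℝ Y]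
    [NormedAddCommGroup Z] [NormedSpace ℝ Z]
    (A : Z →L[ℝ] Y) {U : Set Y} (f : Y → Z) (Df : Y → (Y →L[ℝ] Z))
    (hf : ∀ x ∈ U, HasFDerivAt f (Df x) x)
    {C : Set Y} (hCconv : Convex ℝ C) (hCcl : IsClosed C)
    (x x' : Y) (hseg : ∀ t ∈ Icc (0:ℝ) 1, x' + t • (x - x') ∈ U)
    (hmem : ∀ t ∈ Icc (0:ℝ) 1,
      (x - x') - A (Df (x' + t • (x - x')) (x - x')) ∈ C) :
    (x - x') - (A (f x) - A (f x')) ∈ C := by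
  set γ : ℝ → Y := fun t => x' + t • (x - x') with hγ
  have hmain : (fun t : ℝ => t • (x - x') - A (f (γ t))) 1
      - (fun t : ℝ => t • (x - x') - A (f (γ t))) 0 ∈ C := by
    refine mvt_mem_aux hCconv hCcl
      (g := fun t : ℝ => t • (x - x') - A (f (γ t)))
      (g' := fun t => (x - x') - A (Df (γ t) (x - x'))) ?_ hmem
    intro t ht
    have hγd : HasDerivWithinAt γ (x - x') (Icc 0 1) t := by
      have : HasDerivAt (fun s : ℝ => x' + s • (x - x')) ((1:ℝ) • (x - x')) t :=
        ((hasDerivAt_id t).smul_const (x - x')).const_add x'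
      rw [one_smul] at this; exact this.hasDerivWithinAt
    have hfd : HasDerivWithinAt (fun t => f (γ t)) (Df (γ t) (x - x')) (Icc 0 1) t :=
      (hf (γ t) (hseg t ht)).comp_hasDerivWithinAt t hγd
    have hAfd : HasDerivWithinAt (fun t => A (f (γ t))) (A (Df (γ t) (x - x')))
        (Icc 0 1) t := A.hasFDerivAt.comp_hasDerivWithinAt t hfd
    have hid : HasDerivWithinAt (fun s : ℝ => s • (x - x')) (x - x') (Icc 0 1) t := by
      simpa using ((hasDerivAt_id t).smul_const (x - x')).hasDerivWithinAt
    exact hid.sub hAfd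
  have h0 : γ 0 = x' := by simp [hγ]
  have h1 : γ 1 = x := by simp [hγ]
  have hmain' : (x - x') - A (f x) + A (f x') ∈ C := by
    simpa [h0, h1, one_smul, zero_smul] using hmain
  have heq : (x - x') - (A (f x) - A (f x')) = (x - x') - A (f x) + A (f x') := by abel
  rw [heq]
  exact hmain'

/-- Krawczyk operator in Banach spaces: if K(X, x̄) ⊆ X and the defect set is
contained in λ·(X − x̄) for some 0 ≤ λ < 1, then f has a unique zero in X. -/
theorem krawczyk_uniqueness
    {Y Z : Type*} [NormedAddCommGroup Y] [NormedSpace ℝ Y] [CompleteSpace Y]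
    [NormedAddCommGroup Z] [NormedSpace ℝ Z] [CompleteSpace Z]
    (A : Z →L[ℝ] Y) (hA : Function.Injective A)
    (X : Set Y) (hXconv : Convex ℝ X) (hXclosed : IsClosed X)
    (hXbdd : Bornology.IsBounded X)
    (U : Set Y) (hU : IsOpen U) (hXU : X ⊆ U)
    (f : Y → Z) (Df : Y → (Y →L[ℝ] Z))
    (hf : ∀ x ∈ U, HasFDerivAt f (Df x) x)
    (xb : Y) (hxb : xb ∈ X)
    (hK : ∀ y ∈ closure (convexHull ℝ
        {y : Y | ∃ x₁ ∈ X, ∃ x₂ ∈ X, y = (x₂ - xb) - A (Df x₁ (x₂ - xb))}),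
      xb - A (f xb) + y ∈ X)
    (lam : ℝ) (hlam0 : 0 ≤ lam) (hlam1 : lam < 1)
    (hcontr : {y : Y | ∃ x₁ ∈ X, ∃ x₂ ∈ X, y = (x₂ - xb) - A (Df x₁ (x₂ - xb))} ⊆
      (fun x => lam • (x - xb)) '' X) :
    ∃! xh, xh ∈ X ∧ f xh = 0 := by
  classical
  set S : Set Y := {y : Y | ∃ x₁ ∈ X, ∃ x₂ ∈ X, y = (x₂ - xb) - A (Df x₁ (x₂ - xb))}
    with hS
  set N : Y → Y := fun x => x - A (f x) with hN
  -- segment membership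
  have hsegX : ∀ x ∈ X, ∀ x' ∈ X, ∀ t ∈ Icc (0:ℝ) 1, x' + t • (x - x') ∈ X := by
    intro x hx x' hx' t ht
    exact hXconv.add_smul_sub_mem hx' hx ht
  -- Step A: N maps X to X
  have hNX : ∀ x ∈ X, N x ∈ X := by
    intro x hx
    have hC : (x - xb) - (A (f x) - A (f xb)) ∈ closure (convexHull ℝ S) := by
      apply seg_mem_aux A f Df hf ((convex_convexHull ℝ S).closure) isClosed_closure
      · intro t ht; exact hXU (hsegX x hx xb hxb t ht)
      · intro t ht
        apply subset_closure
        apply subset_convexHull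
        exact ⟨xb + t • (x - xb), hsegX x hx xb hxb t ht, x, hx, rfl⟩
    have := hK _ hC
    have heq : xb - A (f xb) + ((x - xb) - (A (f x) - A (f xb))) = N x := by
      simp only [hN]; abel
    rwa [heq] at this
  -- the sets P n
  set P : ℕ → Set Y := fun n => closure ((lam ^ n) • (X - X)) with hP
  have hPconv : ∀ n, Convex ℝ (P n) := fun n => ((hXconv.sub hXconv).smul _).closure
  have hPcl : ∀ n, IsClosed (P n) := fun n => isClosed_closure
  -- bound
  obtain ⟨R, hR⟩ := hXbdd.exists_norm_le
  have hPbdd : ∀ n, ∀ w ∈ P n, ‖w‖ ≤ (2 * R) * lam ^ n := by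
    intro n w hw
    have hclosed : IsClosed {w : Y | ‖w‖ ≤ (2 * R) * lam ^ n} :=
      isClosed_le continuous_norm continuous_const
    have hsub : (lam ^ n) • (X - X) ⊆ {w : Y | ‖w‖ ≤ (2 * R) * lam ^ n} := by
      rintro _ ⟨d, ⟨u, hu, v, hv, rfl⟩, rfl⟩
      have : ‖u - v‖ ≤ 2 * R := by
        calc ‖u - v‖ ≤ ‖u‖ + ‖v‖ := norm_sub_le u v
        _ ≤ 2 * R := by have := hR u hu; have := hR v hv; linarith
      show ‖lam ^ n • (u - v)‖ ≤ 2 * R * lam ^ n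
      rw [norm_smul, Real.norm_eq_abs, abs_of_nonneg (pow_nonneg hlam0 n)]
      calc lam ^ n * ‖u - v‖ ≤ lam ^ n * (2 * R) :=
            mul_le_mul_of_nonneg_left this (pow_nonneg hlam0 n)
        _ = (2 * R) * lam ^ n := by ring
    exact closure_minimal hsub hclosed hw
  -- contraction step
  have hcontract : ∀ n, ∀ x ∈ X, ∀ x' ∈ X, x - x' ∈ P n → N x - N x' ∈ P (n + 1) := by
    intro n x hx x' hx' hd
    have hC : (x - x') - (A (f x) - A (f x')) ∈ P (n + 1) := by
      apply seg_mem_aux A f Df hf (hPconv (n+1)) (hPcl (n+1))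
      · intro t ht; exact hXU (hsegX x hx x' hx' t ht)
      · intro t ht
        set x₁ : Y := x' + t • (x - x') with hx₁
        have hx₁X : x₁ ∈ X := hsegX x hx x' hx' t ht
        set L : Y →L[ℝ] Y := ContinuousLinearMap.id ℝ Y - A.comp (Df x₁) with hL
        have hLim : L '' ((lam ^ n) • (X - X)) ⊆ (lam ^ (n+1)) • (X - X) := by
          rintro _ ⟨_, ⟨d, ⟨u, hu, v, hv, rfl⟩, rfl⟩, rfl⟩
          have hup : (u - xb) - A (Df x₁ (u - xb)) ∈ S := ⟨x₁, hx₁X, u, hu, rfl⟩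
          have hvp : (v - xb) - A (Df x₁ (v - xb)) ∈ S := ⟨x₁, hx₁X, v, hv, rfl⟩
          obtain ⟨p, hp, hpe⟩ := hcontr hup
          obtain ⟨q, hq, hqe⟩ := hcontr hvp
          show L (lam ^ n • (u - v)) ∈ lam ^ (n+1) • (X - X)
          have hLu : L (u - xb) = lam • (p - xb) := by
            simp only [hL, ContinuousLinearMap.sub_apply, ContinuousLinearMap.id_apply,
              ContinuousLinearMap.comp_apply]
            exact hpe.symm
          have hLv : L (v - xb) = lam • (q - xb) := by
            simp only [hL, ContinuousLinearMap.sub_apply, ContinuousLinearMap.id_apply,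
              ContinuousLinearMap.comp_apply]
            exact hqe.symm
          have key : L (lam ^ n • (u - v)) = lam ^ (n+1) • (p - q) := by
            rw [map_smul]
            have huv : L (u - v) = L (u - xb) - L (v - xb) := by
              rw [← map_sub]; congr 1; abel
            rw [huv, hLu, hLv, ← smul_sub, smul_smul, pow_succ]
            congr 1
            abel
          exact key ▸ Set.smul_mem_smul_set (Set.sub_mem_sub hp hq)
        have hLcont : L (x - x') ∈ P (n+1) := by
          have h1 : L (x - x') ∈ L '' closure ((lam ^ n) • (X - X)) :=
            mem_image_of_mem L hd
          have h2 := (image_closure_subset_closure_image L.continuous) h1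
          exact closure_mono hLim h2
        have hLeq : L (x - x') = (x - x') - A (Df x₁ (x - x')) := by
          simp [hL]
        rw [← hLeq]
        exact hLcont
    have heq : (x - x') - (A (f x) - A (f x')) = N x - N x' := by
      simp only [hN]; abel
    rwa [heq] at hC
  -- P 0 contains differences
  have hP0 : ∀ x ∈ X, ∀ x' ∈ X, x - x' ∈ P 0 := by
    intro x hx x' hx'
    apply subset_closure
    refine ⟨x - x', ⟨x, hx, x', hx', rfl⟩, ?_⟩
    simp
  -- iteration
  set seq : ℕ → Y := fun n => N^[n] xb with hseq
  have hseqX : ∀ n, seq n ∈ X := by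
    intro n
    induction n with
    | zero => simpa [hseq] using hxb
    | succ k ih =>
      have : seq (k+1) = N (seq k) := by
        simp [hseq, Function.iterate_succ_apply']
      rw [this]; exact hNX _ ih
  have hseqsucc : ∀ n, seq (n+1) = N (seq n) := by
    intro n; simp [hseq, Function.iterate_succ_apply']
  have hdiff : ∀ n, seq (n+1) - seq n ∈ P n := by
    intro n
    induction n with
    | zero => exact hP0 _ (hseqX 1) _ (hseqX 0)
    | succ k ih =>
      have h := hcontract k _ (hseqX (k+1)) _ (hseqX k) ih
      rwa [← hseqsucc (k+1), ← hseqsucc k] at h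
  have hcauchy : CauchySeq seq := by
    apply cauchySeq_of_le_geometric lam (2 * R) hlam1
    intro n
    rw [dist_eq_norm, ← norm_neg]
    simpa [neg_sub] using hPbdd n _ (hdiff n)
  obtain ⟨xh, hxh_tendsto⟩ := cauchySeq_tendsto_of_complete hcauchy
  have hxhX : xh ∈ X :=
    hXclosed.mem_of_tendsto hxh_tendsto (Filter.Eventually.of_forall hseqX)
  -- fixed point
  have hNfix : N xh = xh := by
    have hNc : ContinuousAt N xh := by
      have hfc : ContinuousAt f xh := (hf xh (hXU hxhX)).continuousAt
      exact continuousAt_id.sub (A.continuous.continuousAt.comp hfc)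
    have h1 : Filter.Tendsto (fun n => N (seq n)) Filter.atTop (nhds (N xh)) :=
      hNc.tendsto.comp hxh_tendsto
    have h2 : Filter.Tendsto (fun n => seq (n+1)) Filter.atTop (nhds xh) :=
      hxh_tendsto.comp (Filter.tendsto_add_atTop_nat 1)
    have h3 : (fun n => N (seq n)) = fun n => seq (n+1) := by
      funext n; exact (hseqsucc n).symm
    rw [h3] at h1
    exact tendsto_nhds_unique h1 h2
  have hfxh : f xh = 0 := by
    have : A (f xh) = 0 := by
      have := hNfix
      simp only [hN] at this
      have h := sub_eq_self.mp this
      exact h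
    apply hA
    rw [this, map_zero]
  -- uniqueness via contraction
  have huniq : ∀ y ∈ X, f y = 0 → y = xh := by
    intro y hy hfy
    have hNy : N y = y := by simp [hN, hfy]
    have hNx : N xh = xh := hNfix
    have hPn : ∀ n, y - xh ∈ P n := by
      intro n
      induction n with
      | zero => exact hP0 _ hy _ hxhX
      | succ k ih =>
        have := hcontract k y hy xh hxhX ih
        rwa [hNy, hNx] at this
    have hnorm : ∀ n, ‖y - xh‖ ≤ (2 * R) * lam ^ n := fun n => hPbdd n _ (hPn n)
    have htend : Filter.Tendsto (fun n => (2 * R) * lam ^ n) Filter.atTop (nhds 0) := by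
      have := tendsto_pow_atTop_nhds_zero_of_lt_one hlam0 hlam1
      simpa using this.const_mul (2 * R)
    have : ‖y - xh‖ ≤ 0 := ge_of_tendsto htend (Filter.Eventually.of_forall hnorm)
    have : y - xh = 0 := by
      have := le_antisymm this (norm_nonneg _)
      exact norm_eq_zero.mp this
    exact sub_eq_zero.mp this
  exact ⟨xh, ⟨hxhX, hfxh⟩, fun y hy => huniq y hy.1 hy.2⟩
end

section
/- Let f : ℝ → ℝ satisfy x·f(x) > 0 for all x ≠ 0. Suppose x₀ : ℝ → ℝ is a periodic solution with period L₀ of the delay equation x'(t) = −α₀ f(x(t−1)), and suppose r := 1 − n·L₀ satisfies 0 < r, where n is a nonnegative integer. Then x₁(t) := x₀(r·t) is a periodic solution of x'(t) = −α₁ f(x(t−1)) with α₁ := r·α₀, i.e., x₁'(t) = −α₁ f(x₁(t−1)) for all t. -/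
/-- Rescaling of periodic solutions of the negative feedback delay equation:
if x₀ is an L₀-periodic solution of x' (t) = −α₀ f(x(t−1)) and r = 1 − n·L₀ > 0,
then x₁(t) = x₀(r t) solves x₁'(t) = −(r α₀) f(x₁(t−1)). -/
theorem rescaling_periodic_solution
    (f : ℝ → ℝ) (hpos : ∀ x : ℝ, x ≠ 0 → x * f x > 0)
    (α₀ L₀ : ℝ) (x₀ : ℝ → ℝ)
    (hper : ∀ t : ℝ, x₀ (t + L₀) = x₀ t)
    (hsol : ∀ t : ℝ, HasDerivAt x₀ (-α₀ * f (x₀ (t - 1))) t)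
    (n : ℕ) (r : ℝ) (hr : r = 1 - n * L₀) (hrpos : 0 < r) :
    ∀ t : ℝ, HasDerivAt (fun t => x₀ (r * t)) (-(r * α₀) * f (x₀ (r * (t - 1)))) t := by
  have hpern : ∀ (m : ℕ) (s : ℝ), x₀ (s + m * L₀) = x₀ s := by
    intro m s
    induction m with
    | zero => simp
    | succ k ih =>
      have : s + (k + 1 : ℕ) * L₀ = (s + k * L₀) + L₀ := by push_cast; ring
      rw [this, hper, ih]
  intro t
  have key : x₀ (r * t - 1) = x₀ (r * (t - 1)) := by
    have : r * t - 1 + n * L₀ = r * (t - 1) := by rw [hr]; ring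
    rw [← hpern n (r * t - 1), this]
  have h := (hsol (r * t)).comp t ((hasDerivAt_id t).const_mul r)
  simpa [key, mul_comm, mul_left_comm, mul_assoc, Function.comp_def] using h
end

section
/- For real s > 1 and integers M ≥ 1 and k ≥ 2(M+1), the middle convolution tail satisfies ∑_{j=M+1}^{k−M−1} 1/(j^s (k−j)^s) ≤ (2^{s+1}/(k^s (s−1)))·(1/M^{s−1} − 1/(k/2)^{s−1}). -/
/-!
Split the sum at `k / 2`. By the symmetry `j ↦ k - j` the upper half is at most the lower half,
and on the lower half `k - j ≥ k / 2`, so each term is at most `(2 / k) ^ s / j ^ s`. The remaining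
tail `∑_{M < j ≤ k/2} j ^ (-s)` is bounded by `∫_M^{k/2} x ^ (-s) dx`.
-/

open Finset

lemma sum_Ioc_one_div_rpow_le {s : ℝ} (hs : 1 < s) {M N : ℕ} (hM : 0 < M) (hMN : M ≤ N) :
    ∑ j ∈ Ioc M N, 1 / (j : ℝ) ^ s ≤
      (1 / (M : ℝ) ^ (s - 1) - 1 / (N : ℝ) ^ (s - 1)) / (s - 1) := by
  have hM0 : (0 : ℝ) < M := by exact_mod_cast hM
  have hN0 : (0 : ℝ) < N := hM0.trans_le (by exact_mod_cast hMN)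
  have hanti : AntitoneOn (fun x : ℝ => x ^ (-s)) (Set.Icc (M : ℝ) N) := fun x hx y _ hxy =>
    Real.rpow_le_rpow_of_nonpos (hM0.trans_le hx.1) hxy (by linarith)
  have hshift : ∑ j ∈ Ioc M N, 1 / (j : ℝ) ^ s = ∑ i ∈ Ico M N, ((i + 1 : ℕ) : ℝ) ^ (-s) := by
    rw [← Icc_add_one_left_eq_Ioc, ← Ico_add_one_right_eq_Icc, ← map_add_right_Ico, sum_map]
    refine sum_congr rfl fun i _ => ?_
    rw [addRightEmbedding_apply, Real.rpow_neg (by positivity), one_div]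
  have hintegral : ∫ x in (M : ℝ)..N, x ^ (-s) = ((N : ℝ) ^ (-s + 1) - (M : ℝ) ^ (-s + 1)) / (-s + 1) :=
    integral_rpow <| Or.inr ⟨by linarith, fun h => by
      rw [Set.uIcc_of_le (by exact_mod_cast hMN)] at h; linarith [h.1]⟩
  rw [hshift]
  refine (hanti.sum_le_integral_Ico (by exact_mod_cast hMN)).trans_eq ?_
  rw [hintegral, show -s + 1 = -(s - 1) by ring, Real.rpow_neg hM0.le, Real.rpow_neg hN0.le,
    div_neg, ← neg_div, neg_sub, one_div, one_div]

lemma sum_Ioc_div_two_one_div_rpow_mul_le {s : ℝ} (hs : 0 ≤ s) (M k : ℕ) :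
    ∑ j ∈ Ioc M (k / 2), 1 / ((j : ℝ) ^ s * ((k - j : ℕ) : ℝ) ^ s) ≤
      (2 / (k : ℝ)) ^ s * ∑ j ∈ Ioc M (k / 2), 1 / (j : ℝ) ^ s := by
  rw [mul_sum]
  refine sum_le_sum fun j hj => ?_
  obtain ⟨hMj, hjk⟩ := mem_Ioc.mp hj
  have hj0 : (0 : ℝ) < j := by exact_mod_cast (by omega : 0 < j)
  have hk0 : (0 : ℝ) < k := by exact_mod_cast (by omega : 0 < k)
  have hhalf : (k : ℝ) / 2 ≤ ((k - j : ℕ) : ℝ) := by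
    rw [Nat.cast_sub (by omega), le_sub_iff_add_le]
    have : ((2 * j : ℕ) : ℝ) ≤ k := by exact_mod_cast (by omega : 2 * j ≤ k)
    push_cast at this
    linarith
  have hinv : 1 / ((k - j : ℕ) : ℝ) ≤ 2 / k := by
    rw [div_le_div_iff₀ (by linarith) hk0]
    linarith
  calc 1 / ((j : ℝ) ^ s * ((k - j : ℕ) : ℝ) ^ s)
      = (1 / ((k - j : ℕ) : ℝ)) ^ s * (1 / (j : ℝ) ^ s) := by
        rw [Real.div_rpow zero_le_one (by positivity), Real.one_rpow, div_mul_div_comm, one_mul,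
          mul_comm]
    _ ≤ (2 / (k : ℝ)) ^ s * (1 / (j : ℝ) ^ s) := by gcongr

lemma sum_Ioc_upper_half_le_of_symm {f : ℕ → ℝ} (hf : ∀ j, 0 ≤ f j) {k : ℕ}
    (hsymm : ∀ j ≤ k, f (k - j) = f j) (M : ℕ) :
    ∑ j ∈ Ioc (k / 2) (k - M - 1), f j ≤ ∑ j ∈ Ioc M (k / 2), f j := by
  have hinj : Set.InjOn (k - ·) (Ioc (k / 2) (k - M - 1)) := fun x hx y hy h => by
    simp only [coe_Ioc, Set.mem_Ioc] at hx hy h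
    omega
  calc ∑ j ∈ Ioc (k / 2) (k - M - 1), f j
      = ∑ j ∈ Ioc (k / 2) (k - M - 1), f (k - j) :=
        sum_congr rfl fun j hj => (hsymm j (by simp only [mem_Ioc] at hj; omega)).symm
    _ = ∑ i ∈ (Ioc (k / 2) (k - M - 1)).image (k - ·), f i := (sum_image hinj).symm
    _ ≤ ∑ j ∈ Ioc M (k / 2), f j := by
        refine sum_le_sum_of_subset_of_nonneg (fun i hi => ?_) fun i _ _ => hf i
        obtain ⟨j, hj, rfl⟩ := mem_image.mp hi
        simp only [mem_Ioc] at hj ⊢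
        omega

/-- Middle convolution tail estimate: for s > 1, M ≥ 1 and k ≥ 2(M+1),
∑_{j=M+1}^{k−M−1} 1/(j^s (k−j)^s) ≤ (2^{s+1}/(k^s(s−1)))(1/M^{s−1} − 1/(k/2)^{s−1}). -/
theorem middle_convolution_bound
    (s : ℝ) (hs : 1 < s) (M k : ℕ) (hM : 1 ≤ M) (hk : 2 * (M + 1) ≤ k) :
    (∑ j ∈ Finset.Icc (M + 1) (k - M - 1),
        1 / ((j : ℝ) ^ s * ((k - j : ℕ) : ℝ) ^ s)) ≤
      (2 : ℝ) ^ (s + 1) / ((k : ℝ) ^ s * (s - 1)) *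
        (1 / (M : ℝ) ^ (s - 1) - 1 / ((k : ℝ) / 2) ^ (s - 1)) := by
  set f : ℕ → ℝ := fun j => 1 / ((j : ℝ) ^ s * ((k - j : ℕ) : ℝ) ^ s)
  have hsymm : ∀ j ≤ k, f (k - j) = f j := fun j hj => by
    simp only [f, Nat.sub_sub_self hj, mul_comm]
  have hk0 : (0 : ℝ) < k := by exact_mod_cast (by omega : 0 < k)
  have htail : ∑ j ∈ Ioc M (k / 2), 1 / (j : ℝ) ^ s ≤
      (1 / (M : ℝ) ^ (s - 1) - 1 / ((k : ℝ) / 2) ^ (s - 1)) / (s - 1) := by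
    refine (sum_Ioc_one_div_rpow_le hs hM (by omega)).trans ?_
    have : (0 : ℝ) < (k / 2 : ℕ) := by exact_mod_cast (by omega : 0 < k / 2)
    gcongr
    exact Nat.cast_div_le
  rw [Icc_add_one_left_eq_Ioc, ← sum_Ioc_consecutive _ (by omega : M ≤ k / 2) (by omega)]
  calc ∑ j ∈ Ioc M (k / 2), f j + ∑ j ∈ Ioc (k / 2) (k - M - 1), f j
      ≤ 2 * ∑ j ∈ Ioc M (k / 2), f j := by
        linarith [sum_Ioc_upper_half_le_of_symm (fun j => by positivity) hsymm M]
    _ ≤ 2 * ((2 / (k : ℝ)) ^ s *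
          ((1 / (M : ℝ) ^ (s - 1) - 1 / ((k : ℝ) / 2) ^ (s - 1)) / (s - 1))) := by
        gcongr
        exact (sum_Ioc_div_two_one_div_rpow_mul_le (by linarith) M k).trans (by gcongr)
    _ = _ := by
        rw [Real.div_rpow zero_le_two hk0.le, Real.rpow_add_one two_ne_zero]
        field_simp
end

section
/- Let s ≥ 2 with largest integer s* ≤ s, and for integer k ≥ 4 define γₖ := 2(k/(k−1))^s + (4·ln(k−2)/k + (π²−6)/3)·(2/k + 1/2)^{s*−2}. Then for k ≥ 6 and 6 ≤ M ≤ k, one has ∑_{j=1}^{k−1} k^s/(j^s (k−j)^s) ≤ γₖ ≤ γ_M (assuming the quoted estimate ∑_{j=1}^{k−1} k^s/(j^s(k−j)^s) ≤ γₖ for k ≥ 4); in particular the symmetrized bound ∑_{j=1}^{k−1} 1/(j^{s−1}(k−j)^s) = (k/2)∑_{j=1}^{k−1} 1/(j^s(k−j)^s) ≤ γ_{M+1}/(2k^{s−1}) holds for k ≥ M+1 ≥ 6. -/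
theorem log5_ge_aux : (1.4:ℝ) ≤ Real.log 5 := by
  rw [Real.le_log_iff_exp_le (by norm_num)]
  have h1 : Real.exp 1.4 = Real.exp 1 * Real.exp 0.4 := by
    rw [← Real.exp_add]; norm_num
  have h2 : Real.exp 1 ≤ 2.7182818286 := Real.exp_one_lt_d9.le
  have h3 : Real.exp 0.4 ≤ 5/3 := by
    have h := Real.add_one_le_exp (-0.4)
    have hp : (0:ℝ) < Real.exp 0.4 := Real.exp_pos _
    rw [Real.exp_neg] at h
    have h' := mul_le_mul_of_nonneg_right h hp.le
    rw [inv_mul_cancel₀ hp.ne'] at h'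
    nlinarith
  nlinarith [Real.exp_pos (1:ℝ), Real.exp_pos (0.4:ℝ)]

theorem logdiv_anti_aux {x y : ℝ} (hx : 7 ≤ x) (hxy : x ≤ y) :
    Real.log (y - 2) / y ≤ Real.log (x - 2) / x := by
  have hx2 : (5:ℝ) ≤ x - 2 := by linarith
  have hy2 : (5:ℝ) ≤ y - 2 := by linarith
  have hx0 : (0:ℝ) < x := by linarith
  have hy0 : (0:ℝ) < y := by linarith
  have hL1 : Real.log (y - 2) ≤ Real.log (x - 2) + (y - x) / (x - 2) := by
    have h := Real.log_le_sub_one_of_pos (x := (y - 2) / (x - 2)) (by positivity)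
    rw [Real.log_div (by linarith) (by linarith)] at h
    have : (y - 2) / (x - 2) - 1 = (y - x) / (x - 2) := by
      field_simp
      ring
    linarith [this ▸ h]
  have hL2 : (1.4:ℝ) ≤ Real.log (x - 2) :=
    le_trans log5_ge_aux (Real.log_le_log (by norm_num) hx2)
  have hd : (0:ℝ) ≤ (y - x) / (x - 2) := div_nonneg (by linarith) (by linarith)
  rw [div_le_div_iff₀ hy0 hx0]
  have hkey : x ≤ Real.log (x - 2) * (x - 2) := by nlinarith
  have h5 : (y - x) / (x - 2) * (x - 2) = y - x := by field_simp
  nlinarith [mul_le_mul_of_nonneg_right hL1 hx0.le,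
    mul_le_mul_of_nonneg_left hkey hd]

theorem logdiv_anti6_aux {m k : ℕ} (hm : 6 ≤ m) (hmk : m ≤ k) :
    Real.log ((k:ℝ) - 2) / (k:ℝ) ≤ Real.log ((m:ℝ) - 2) / (m:ℝ) := by
  have log_step67 : Real.log 5 / 7 ≤ Real.log 4 / (6:ℝ) := by
    rw [div_le_div_iff₀ (by norm_num) (by norm_num)]
    have h1 : Real.log 5 * 6 = Real.log ((5:ℝ)^(6:ℕ)) := by
      rw [Real.log_pow]; push_cast; ring
    have h2 : Real.log 4 * 7 = Real.log ((4:ℝ)^(7:ℕ)) := by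
      rw [Real.log_pow]; push_cast; ring
    rw [h1, h2]
    exact Real.log_le_log (by norm_num) (by norm_num)
  rcases eq_or_lt_of_le hm with rfl | hm7
  · rcases eq_or_lt_of_le hmk with rfl | hlt
    · exact le_refl _
    · have hk7 : (7:ℝ) ≤ (k:ℝ) := by exact_mod_cast hlt
      calc Real.log ((k:ℝ) - 2) / (k:ℝ) ≤ Real.log ((7:ℝ) - 2) / 7 :=
            logdiv_anti_aux (le_refl 7) hk7
        _ ≤ Real.log (((6:ℕ):ℝ) - 2) / ((6:ℕ):ℝ) := by
            norm_num
            exact log_step67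
  · have hm7' : (7:ℝ) ≤ (m:ℝ) := by exact_mod_cast hm7
    exact logdiv_anti_aux hm7' (by exact_mod_cast hmk)

theorem gamma_mono_aux (s : ℝ) (hs : 2 ≤ s) (γ : ℕ → ℝ)
    (hγ : ∀ k : ℕ, γ k = 2 * ((k : ℝ) / ((k : ℝ) - 1)) ^ s +
      (4 * Real.log ((k : ℝ) - 2) / (k : ℝ) + (Real.pi ^ 2 - 6) / 3) *
        (2 / (k : ℝ) + 1 / 2) ^ ((⌊s⌋ : ℝ) - 2))
    {m k : ℕ} (hm : 6 ≤ m) (hmk : m ≤ k) : γ k ≤ γ m := by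
  have hm6 : (6:ℝ) ≤ (m:ℝ) := by exact_mod_cast hm
  have hk6 : (6:ℝ) ≤ (k:ℝ) := le_trans hm6 (by exact_mod_cast hmk)
  have hmk' : (m:ℝ) ≤ (k:ℝ) := by exact_mod_cast hmk
  have hs0 : (0:ℝ) ≤ s := by linarith
  have he : (0:ℝ) ≤ (⌊s⌋ : ℝ) - 2 := by
    have : (2:ℤ) ≤ ⌊s⌋ := by
      rw [Int.le_floor]; exact_mod_cast hs
    have : ((2:ℤ):ℝ) ≤ ((⌊s⌋:ℤ):ℝ) := by exact_mod_cast this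
    push_cast at this ⊢; linarith
  rw [hγ k, hγ m]
  have hA : ((k:ℝ) / ((k:ℝ) - 1)) ^ s ≤ ((m:ℝ) / ((m:ℝ) - 1)) ^ s := by
    apply Real.rpow_le_rpow (div_nonneg (by positivity) (by linarith))
    · rw [div_le_div_iff₀ (by linarith) (by linarith)]
      nlinarith
    · exact hs0
  have hpi : (0:ℝ) ≤ (Real.pi ^ 2 - 6) / 3 := by
    nlinarith [Real.pi_gt_three]
  have hlogk : (0:ℝ) ≤ Real.log ((k:ℝ) - 2) := Real.log_nonneg (by linarith)
  have hB : 4 * Real.log ((k:ℝ) - 2) / (k:ℝ) + (Real.pi ^ 2 - 6) / 3 ≤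
      4 * Real.log ((m:ℝ) - 2) / (m:ℝ) + (Real.pi ^ 2 - 6) / 3 := by
    have := logdiv_anti6_aux hm hmk
    have h4 : 4 * Real.log ((k:ℝ) - 2) / (k:ℝ) = 4 * (Real.log ((k:ℝ) - 2) / (k:ℝ)) := by ring
    have h5 : 4 * Real.log ((m:ℝ) - 2) / (m:ℝ) = 4 * (Real.log ((m:ℝ) - 2) / (m:ℝ)) := by ring
    rw [h4, h5]; linarith
  have hB0 : (0:ℝ) ≤ 4 * Real.log ((k:ℝ) - 2) / (k:ℝ) + (Real.pi ^ 2 - 6) / 3 := by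
    have : (0:ℝ) ≤ 4 * Real.log ((k:ℝ) - 2) / (k:ℝ) := by positivity
    linarith
  have hC : (2 / (k:ℝ) + 1 / 2) ^ ((⌊s⌋ : ℝ) - 2) ≤
      (2 / (m:ℝ) + 1 / 2) ^ ((⌊s⌋ : ℝ) - 2) := by
    apply Real.rpow_le_rpow (by positivity)
    · have : 2 / (k:ℝ) ≤ 2 / (m:ℝ) := by
        apply div_le_div_of_nonneg_left (by norm_num) (by linarith) hmk'
      linarith
    · exact he
  have hC0 : (0:ℝ) ≤ (2 / (k:ℝ) + 1 / 2) ^ ((⌊s⌋ : ℝ) - 2) := Real.rpow_nonneg (by positivity) _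
  have hB0' : (0:ℝ) ≤ 4 * Real.log ((m:ℝ) - 2) / (m:ℝ) + (Real.pi ^ 2 - 6) / 3 := le_trans hB0 hB
  have := mul_le_mul hB hC hC0 hB0'
  linarith

theorem sym_sum_aux (s : ℝ) (k : ℕ) :
    2 * (∑ j ∈ Finset.Ico 1 k, 1 / ((j : ℝ) ^ (s - 1) * ((k - j : ℕ) : ℝ) ^ s)) =
    (k:ℝ) * ∑ j ∈ Finset.Ico 1 k, 1 / ((j : ℝ) ^ s * ((k - j : ℕ) : ℝ) ^ s) := by
  have hrefl : (∑ j ∈ Finset.Ico 1 k, 1 / ((j : ℝ) ^ (s - 1) * ((k - j : ℕ) : ℝ) ^ s))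
      = ∑ j ∈ Finset.Ico 1 k, 1 / (((k - j : ℕ) : ℝ) ^ (s - 1) * ((j : ℕ) : ℝ) ^ s) := by
    apply Finset.sum_nbij' (fun j => k - j) (fun j => k - j)
    all_goals intro a ha
    all_goals simp only [Finset.mem_Ico] at *
    · omega
    · omega
    · omega
    · omega
    · have h : k - (k - a) = a := by omega
      rw [h]
  rw [two_mul]
  nth_rewrite 2 [hrefl]
  rw [← Finset.sum_add_distrib, Finset.mul_sum]
  apply Finset.sum_congr rfl
  intro j hj
  simp only [Finset.mem_Ico] at hj
  have hj1 : (1:ℝ) ≤ (j:ℝ) := by exact_mod_cast hj.1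
  have ha : (0:ℝ) < (j:ℝ) := by linarith
  have hb : (0:ℝ) < ((k - j : ℕ) : ℝ) := by
    have : 1 ≤ k - j := by omega
    exact_mod_cast Nat.lt_of_lt_of_le Nat.zero_lt_one this
  set a := (j:ℝ); set b := ((k - j : ℕ) : ℝ)
  have hab : a + b = (k:ℝ) := by
    simp only [a, b]
    push_cast [Nat.cast_sub hj.2.le]
    ring
  have has : a ^ (s-1) * a = a ^ s := by
    rw [← Real.rpow_add_one ha.ne']; ring_nf
  have hbs : b ^ (s-1) * b = b ^ s := by
    rw [← Real.rpow_add_one hb.ne']; ring_nf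
  have ha0 : a ^ s ≠ 0 := (Real.rpow_pos_of_pos ha s).ne'
  have hb0 : b ^ s ≠ 0 := (Real.rpow_pos_of_pos hb s).ne'
  have ha1 : a ^ (s-1) ≠ 0 := (Real.rpow_pos_of_pos ha _).ne'
  have hb1 : b ^ (s-1) ≠ 0 := (Real.rpow_pos_of_pos hb _).ne'
  have e1 : 1/(a^(s-1)*b^s) = a/(a^s*b^s) := by
    rw [← has]; field_simp
  have e2 : 1/(b^(s-1)*a^s) = b/(a^s*b^s) := by
    rw [← hbs]; field_simp
  rw [e1, e2, ← add_div, hab]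
  ring

/-- Convolution bound via γₖ (Lemma 2.9): monotonicity γₖ ≤ γ_M for
6 ≤ M ≤ k together with the symmetrized estimate
∑_{j=1}^{k−1} 1/(j^{s−1}(k−j)^s) ≤ γ_{M+1}/(2k^{s−1}). -/
theorem gamma_convolution_bound
    (s : ℝ) (hs : 2 ≤ s)
    (γ : ℕ → ℝ)
    (hγ : ∀ k : ℕ, γ k = 2 * ((k : ℝ) / ((k : ℝ) - 1)) ^ s +
      (4 * Real.log ((k : ℝ) - 2) / (k : ℝ) + (Real.pi ^ 2 - 6) / 3) *
        (2 / (k : ℝ) + 1 / 2) ^ ((⌊s⌋ : ℝ) - 2))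
    (hquoted : ∀ k : ℕ, 4 ≤ k →
      (∑ j ∈ Finset.Ico 1 k, (k : ℝ) ^ s / ((j : ℝ) ^ s * ((k - j : ℕ) : ℝ) ^ s)) ≤ γ k)
    (M k : ℕ) (hM : 6 ≤ M) (hk : M + 1 ≤ k) :
    (∑ j ∈ Finset.Ico 1 k, (k : ℝ) ^ s / ((j : ℝ) ^ s * ((k - j : ℕ) : ℝ) ^ s)) ≤ γ k ∧
      γ k ≤ γ M ∧
      (∑ j ∈ Finset.Ico 1 k, 1 / ((j : ℝ) ^ (s - 1) * ((k - j : ℕ) : ℝ) ^ s)) ≤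
        γ (M + 1) / (2 * (k : ℝ) ^ (s - 1)) := by
  have h1 := hquoted k (by omega)
  have h2 := gamma_mono_aux s hs γ hγ hM (by omega : M ≤ k)
  refine ⟨h1, h2, ?_⟩
  have hG : (∑ j ∈ Finset.Ico 1 k, (k : ℝ) ^ s / ((j : ℝ) ^ s * ((k - j : ℕ) : ℝ) ^ s))
      ≤ γ (M + 1) :=
    le_trans h1 (gamma_mono_aux s hs γ hγ (by omega : 6 ≤ M + 1) hk)
  set P := ∑ j ∈ Finset.Ico 1 k, 1 / ((j : ℝ) ^ s * ((k - j : ℕ) : ℝ) ^ s) with hP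
  have hT : (∑ j ∈ Finset.Ico 1 k, (k : ℝ) ^ s / ((j : ℝ) ^ s * ((k - j : ℕ) : ℝ) ^ s))
      = (k:ℝ)^s * P := by
    rw [hP, Finset.mul_sum]
    apply Finset.sum_congr rfl
    intro j _
    rw [mul_one_div]
  have h2S := sym_sum_aux s k
  have hk0 : (0:ℝ) < (k:ℝ) := by
    have : 0 < k := by omega
    exact_mod_cast this
  have hks : (k:ℝ)^s = (k:ℝ)^(s-1) * (k:ℝ) := by
    rw [← Real.rpow_add_one hk0.ne']; ring_nf
  rw [le_div_iff₀ (by positivity)]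
  have key : (∑ j ∈ Finset.Ico 1 k, 1 / ((j : ℝ) ^ (s - 1) * ((k - j : ℕ) : ℝ) ^ s)) *
      (2 * (k:ℝ)^(s-1)) = (k:ℝ)^s * P := by
    rw [hks]
    linear_combination (k:ℝ)^(s-1) * h2S
  rw [key, ← hT]
  exact hG
end

section
/- Let Ω^s denote the space of complex sequences c = {cₖ}_{k≥1} with norm ‖c‖_s = sup_k k^s|cₖ| < ∞, and let a ∈ Ω^s with s > 2 satisfy aₖ = 0 for k ≤ M (M ≥ 5) and |aₖ| ≤ C₀/k^s for k > M. If b satisfies the same hypotheses, then for all k ≥ M+1 the convolution (extended with a₀=b₀=0, a₋ₖ=aₖ*) satisfies |(a*b)ₖ| ≤ (1/k^s)·(2C₀²(2^s+1))/((s−1)M^{s−1}). -/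
open Finset

private lemma mvt_rpow_aux {s : ℝ} (hs : 1 < s) {x : ℝ} (hx : 1 ≤ x) :
    (s - 1) * (x + 1) ^ (-s) ≤ x ^ (1 - s) - (x + 1) ^ (1 - s) := by
  have hx0 : (0:ℝ) < x := lt_of_lt_of_le one_pos hx
  obtain ⟨c, hc, hcd⟩ := exists_hasDerivAt_eq_slope (fun y : ℝ => y ^ (1 - s))
    (fun y : ℝ => (1 - s) * y ^ (-s)) (by linarith : x < x + 1)
    (fun y hy => by
      exact (Real.continuousAt_rpow_const y (1 - s)
        (Or.inl (by rcases hy with ⟨h1, _⟩; exact ne_of_gt (lt_of_lt_of_le hx0 h1)))).continuousWithinAt)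
    (fun y hy => by
      have hy0 : y ≠ 0 := by rcases hy with ⟨h1, _⟩; exact ne_of_gt (lt_trans hx0 h1)
      have h := Real.hasDerivAt_rpow_const (x := y) (p := 1 - s) (Or.inl hy0)
      have he : (1:ℝ) - s - 1 = -s := by ring
      rwa [he] at h)
  have h1 : x + 1 - x = 1 := by ring
  rw [h1, div_one] at hcd
  have hcpos : 0 < c := lt_trans hx0 hc.1
  have hmono : (x + 1) ^ (-s) ≤ c ^ (-s) :=
    Real.rpow_le_rpow_of_nonpos hcpos hc.2.le (by linarith)
  nlinarith [mul_le_mul_of_nonneg_left hmono (by linarith : (0:ℝ) ≤ s - 1)]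

private lemma tail_sum_aux {s : ℝ} (hs : 1 < s) {M : ℕ} (hM : 1 ≤ M) (N : ℕ) :
    ∑ i ∈ Finset.range N, ((M:ℝ) + i + 1) ^ (-s) ≤ (M:ℝ) ^ (1 - s) / (s - 1) := by
  have hs1 : (0:ℝ) < s - 1 := by linarith
  have hM1 : (1:ℝ) ≤ (M:ℝ) := by exact_mod_cast hM
  set g : ℕ → ℝ := fun i => ((M:ℝ) + i) ^ (1 - s) with hg
  have step : ∀ i : ℕ, ((M:ℝ) + i + 1) ^ (-s) ≤ (g i - g (i + 1)) / (s - 1) := by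
    intro i
    have hx : (1:ℝ) ≤ (M:ℝ) + i := by
      have : (0:ℝ) ≤ (i:ℝ) := Nat.cast_nonneg i
      linarith
    have h := mvt_rpow_aux hs hx
    rw [le_div_iff₀ hs1]
    have hgi1 : g (i + 1) = ((M:ℝ) + i + 1) ^ (1 - s) := by
      simp only [hg]; push_cast; ring_nf
    rw [hgi1]
    simp only [hg]
    nlinarith [h]
  calc ∑ i ∈ Finset.range N, ((M:ℝ) + i + 1) ^ (-s)
      ≤ ∑ i ∈ Finset.range N, (g i - g (i + 1)) / (s - 1) :=
        Finset.sum_le_sum fun i _ => step i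
    _ = (∑ i ∈ Finset.range N, (g i - g (i + 1))) / (s - 1) := by
        rw [Finset.sum_div]
    _ = (g 0 - g N) / (s - 1) := by rw [Finset.sum_range_sub' g N]
    _ ≤ g 0 / (s - 1) := by
        have hgN : 0 ≤ g N := Real.rpow_nonneg (by positivity) _
        exact (div_le_div_iff_of_pos_right hs1).mpr (by linarith)
    _ = (M:ℝ) ^ (1 - s) / (s - 1) := by simp [hg]

set_option maxHeartbeats 2000000

/-- Tail-tail convolution estimate (eq:Hinfty*Hinfty): if a, b are supported
on modes > M with |aⱼ|, |bⱼ| ≤ C₀/j^s, then for k ≥ M+1,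
|(a*b)ₖ| ≤ (1/k^s)·2C₀²(2^s+1)/((s−1)M^{s−1}). -/
theorem tail_tail_convolution_bound
    (s : ℝ) (hs : 2 < s) (M : ℕ) (hM : 5 ≤ M) (C₀ : ℝ) (hC₀ : 0 ≤ C₀)
    (a b : ℤ → ℂ)
    (hasym : ∀ k : ℤ, a (-k) = starRingEnd ℂ (a k))
    (hbsym : ∀ k : ℤ, b (-k) = starRingEnd ℂ (b k))
    (hasupp : ∀ k : ℤ, 0 ≤ k → k ≤ (M : ℤ) → a k = 0)
    (hbsupp : ∀ k : ℤ, 0 ≤ k → k ≤ (M : ℤ) → b k = 0)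
    (habd : ∀ k : ℤ, (M : ℤ) < k → ‖a k‖ ≤ C₀ / (k : ℝ) ^ s)
    (hbbd : ∀ k : ℤ, (M : ℤ) < k → ‖b k‖ ≤ C₀ / (k : ℝ) ^ s) :
    ∀ k : ℤ, (M : ℤ) + 1 ≤ k →
      ‖∑' j : ℤ, a j * b (k - j)‖ ≤
        1 / (k : ℝ) ^ s * (2 * C₀ ^ 2 * ((2 : ℝ) ^ s + 1) / ((s - 1) * (M : ℝ) ^ (s - 1))) := by
  intro k hk
  have hs1 : (1:ℝ) < s := by linarith
  have hkz : (6:ℤ) ≤ k := by omega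
  have hkr : (6:ℝ) ≤ (k:ℝ) := by exact_mod_cast hkz
  have hkr0 : (0:ℝ) < (k:ℝ) := by linarith
  have hK0 : (0:ℝ) < (k:ℝ) ^ s := Real.rpow_pos_of_pos hkr0 s
  -- the weight function
  set w : ℤ → ℝ := fun m => if (M:ℤ) < |m| then |(m:ℝ)| ^ (-s) else 0 with hwdef
  have hw0 : ∀ m, 0 ≤ w m := by
    intro m; simp only [hwdef]; split
    · positivity
    · exact le_refl 0
  have hwsym : ∀ m, w (-m) = w m := by
    intro m; simp only [hwdef, abs_neg, Int.cast_neg]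
  -- norm bound via the weight
  have norm_le : ∀ f : ℤ → ℂ, (∀ m : ℤ, f (-m) = starRingEnd ℂ (f m)) →
      (∀ m : ℤ, 0 ≤ m → m ≤ (M:ℤ) → f m = 0) →
      (∀ m : ℤ, (M:ℤ) < m → ‖f m‖ ≤ C₀ / (m:ℝ) ^ s) →
      ∀ j : ℤ, ‖f j‖ ≤ C₀ * w j := by
    intro f hsym hsupp hbd j
    by_cases hj : (M:ℤ) < |j|
    · rw [hwdef]; simp only [if_pos hj]
      rcases le_or_gt 0 j with hj0 | hj0
      · have hjM : (M:ℤ) < j := by rwa [abs_of_nonneg hj0] at hj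
        have habs : |(j:ℝ)| = (j:ℝ) := abs_of_nonneg (by exact_mod_cast hj0)
        rw [habs, Real.rpow_neg (by exact_mod_cast hj0), ← div_eq_mul_inv]
        exact hbd j hjM
      · have hjM : (M:ℤ) < -j := by rwa [abs_of_neg hj0] at hj
        have hfj : f j = starRingEnd ℂ (f (-j)) := by
          have := hsym (-j); rwa [neg_neg] at this
        have hnorm : ‖f j‖ = ‖f (-j)‖ := by rw [hfj, RCLike.norm_conj]
        have habs : |(j:ℝ)| = ((-j : ℤ) : ℝ) := by
          push_cast
          rw [abs_of_neg (by exact_mod_cast hj0)]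
        rw [hnorm, habs, Real.rpow_neg (by exact_mod_cast (by omega : (0:ℤ) ≤ -j)),
          ← div_eq_mul_inv]
        exact hbd (-j) hjM
    · rw [hwdef]; simp only [if_neg hj, mul_zero]
      push_neg at hj
      rcases le_or_gt 0 j with hj0 | hj0
      · rw [hsupp j hj0 (by rwa [abs_of_nonneg hj0] at hj)]; simp
      · have : f (-(-j)) = starRingEnd ℂ (f (-j)) := hsym (-j)
        rw [neg_neg] at this
        rw [this, hsupp (-j) (by omega) (by rwa [abs_of_neg hj0] at hj)]
        simp
  have hanorm := norm_le a hasym hasupp habd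
  have hbnorm := norm_le b hbsym hbsupp hbbd
  -- natural-number values of w
  have hwnat : ∀ n : ℕ, w (n:ℤ) = if M < n then (n:ℝ) ^ (-s) else 0 := by
    intro n
    simp only [hwdef, Int.abs_natCast, Nat.cast_lt, Int.cast_natCast,
      Nat.abs_cast, abs_of_nonneg (Nat.cast_nonneg (α := ℝ) n)]
  have hsumnat : Summable (fun n : ℕ => w (n:ℤ)) := by
    apply Summable.of_nonneg_of_le (f := fun n : ℕ => (n:ℝ) ^ (-s)) (fun n => hw0 _)
      (fun n => ?_) (Real.summable_nat_rpow.mpr (by linarith : -s < -1))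
    rw [hwnat]; split
    · exact le_refl _
    · positivity
  have hcastneg : ∀ n : ℕ, ((n + 1 : ℕ) : ℤ) = -(-((n:ℤ) + 1)) := by
    intro n; push_cast; ring
  have hsumneg : Summable (fun n : ℕ => w (-((n:ℤ) + 1))) := by
    have h := (summable_nat_add_iff (f := fun n : ℕ => w (n:ℤ)) 1).mpr hsumnat
    refine h.congr fun n => ?_
    rw [hcastneg n, hwsym]
  have hsumZ : Summable w := Summable.of_nat_of_neg_add_one hsumnat hsumneg
  -- bound on the one-sided tail sum
  have hM1R : (1:ℝ) ≤ (M:ℝ) := by exact_mod_cast (by omega : 1 ≤ M)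
  have hT : (∑' n : ℕ, w (n:ℤ)) ≤ (M:ℝ) ^ (1 - s) / (s - 1) := by
    have h1 := Summable.sum_add_tsum_nat_add (f := fun n : ℕ => w (n:ℤ)) (M + 1) hsumnat
    have h2 : ∑ i ∈ Finset.range (M + 1), w (i:ℤ) = 0 := by
      apply Finset.sum_eq_zero
      intro i hi
      rw [hwnat]
      rw [if_neg (by simp at hi; omega)]
    have h3 : ∀ i : ℕ, w (((i + (M + 1) : ℕ)) : ℤ) = ((M:ℝ) + i + 1) ^ (-s) := by
      intro i
      rw [hwnat, if_pos (by omega)]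
      push_cast; ring_nf
    have hsumsh : Summable (fun i : ℕ => w (((i + (M + 1) : ℕ)) : ℤ)) :=
      (summable_nat_add_iff (f := fun n : ℕ => w (n:ℤ)) (M + 1)).mpr hsumnat
    have h4 : (∑' i : ℕ, w (((i + (M + 1) : ℕ)) : ℤ)) ≤ (M:ℝ) ^ (1 - s) / (s - 1) := by
      apply Summable.tsum_le_of_sum_le hsumsh
      intro F
      obtain ⟨N, hN⟩ := F.exists_nat_subset_range
      calc ∑ i ∈ F, w (((i + (M + 1) : ℕ)) : ℤ)
          ≤ ∑ i ∈ Finset.range N, w (((i + (M + 1) : ℕ)) : ℤ) :=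
            Finset.sum_le_sum_of_subset_of_nonneg hN (fun i _ _ => hw0 _)
        _ = ∑ i ∈ Finset.range N, ((M:ℝ) + i + 1) ^ (-s) := by
            exact Finset.sum_congr rfl fun i _ => h3 i
        _ ≤ (M:ℝ) ^ (1 - s) / (s - 1) := tail_sum_aux hs1 (by omega) N
    rw [← h1, h2, zero_add]
    exact h4
  -- total sum over ℤ
  have hw00 : w (0:ℤ) = 0 := by
    have := hwnat 0; simpa using this
  have hTneg : (∑' n : ℕ, w (-((n:ℤ) + 1))) ≤ (M:ℝ) ^ (1 - s) / (s - 1) := by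
    have heq : (∑' n : ℕ, w (-((n:ℤ) + 1))) = ∑' n : ℕ, w (((n + 1 : ℕ) : ℤ)) :=
      tsum_congr fun n =>
        (show w (((n + 1 : ℕ) : ℤ)) = w (-((n:ℤ) + 1)) by rw [hcastneg n, hwsym]).symm
    rw [heq]
    have h1 := Summable.sum_add_tsum_nat_add (f := fun n : ℕ => w (n:ℤ)) 1 hsumnat
    simp only [Finset.range_one, Finset.sum_singleton, Nat.cast_zero] at h1
    have h1' : w ((0:ℕ):ℤ) + (∑' n : ℕ, w (((n + 1 : ℕ)) : ℤ)) = ∑' n : ℕ, w (n:ℤ) := by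
      exact_mod_cast h1
    rw [show ((0:ℕ):ℤ) = (0:ℤ) from rfl, hw00, zero_add] at h1'
    rw [h1']
    exact hT
  have hZle : (∑' j : ℤ, w j) ≤ 2 * ((M:ℝ) ^ (1 - s) / (s - 1)) := by
    rw [tsum_of_nat_of_neg_add_one hsumnat hsumneg]
    linarith
  -- shifted weight
  have hwshift_sum : Summable (fun j : ℤ => w (k - j)) := by
    have h := (Equiv.subLeft k).summable_iff (f := w) |>.mpr hsumZ
    exact h.congr fun j => by simp [Equiv.subLeft_apply, Function.comp]
  have hwshift_eq : (∑' j : ℤ, w (k - j)) = ∑' j : ℤ, w j := by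
    have h := (Equiv.subLeft k).tsum_eq w
    rw [← h]
    exact tsum_congr fun j => by simp [Equiv.subLeft_apply, Function.comp]
  -- the key pointwise inequality
  set c1 : ℝ := ((2:ℝ) ^ s + 1) / 2 with hc1def
  have h2s : (1:ℝ) ≤ (2:ℝ) ^ s := by
    calc (1:ℝ) = (2:ℝ) ^ (0:ℝ) := (Real.rpow_zero 2).symm
      _ ≤ (2:ℝ) ^ s := Real.rpow_le_rpow_of_exponent_le one_le_two (by linarith)
  have hc1 : (1:ℝ) ≤ c1 := by rw [hc1def]; linarith
  have hc1' : (0:ℝ) < c1 := by linarith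
  have key : ∀ j : ℤ, w j * w (k - j) ≤ c1 / (k:ℝ) ^ s * (w j + w (k - j)) := by
    intro j
    have hRHS0 : 0 ≤ c1 / (k:ℝ) ^ s * (w j + w (k - j)) := by
      apply mul_nonneg (by positivity)
      exact add_nonneg (hw0 _) (hw0 _)
    by_cases h1 : (M:ℤ) < |j|
    swap
    · have hLz : w j * w (k - j) = 0 := by
        rw [hwdef]; simp only [if_neg h1, zero_mul]
      rw [hLz]; exact hRHS0
    by_cases h2 : (M:ℤ) < |k - j|
    swap
    · have hLz : w j * w (k - j) = 0 := by
        rw [hwdef]; simp only [if_neg h2, mul_zero]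
      rw [hLz]; exact hRHS0
    by_cases hj : 0 < j
    · by_cases hjk : j < k
      · -- middle region
        have hx : (0:ℝ) < (j:ℝ) := by exact_mod_cast hj
        have hkj : (0:ℤ) < k - j := by omega
        have hy : (0:ℝ) < ((k - j : ℤ) : ℝ) := by exact_mod_cast hkj
        have hwj : w j = ((j:ℝ)) ^ (-s) := by
          rw [hwdef]; simp only [if_pos h1]; rw [abs_of_pos hx]
        have hwkj : w (k - j) = (((k - j : ℤ) : ℝ)) ^ (-s) := by
          rw [hwdef]; simp only [if_pos h2]; rw [abs_of_pos hy]
        set x : ℝ := (j:ℝ)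
        set y : ℝ := ((k - j : ℤ) : ℝ)
        have hxy : x + y = (k:ℝ) := by simp only [x, y]; push_cast; ring
        -- main inequality: k^s ≤ c1 * (x^s + y^s)
        have h2pow : (x + y) ^ s ≤ (2:ℝ) ^ (s - 1) * (x ^ s + y ^ s) := by
          have hNN := NNReal.rpow_add_le_mul_rpow_add_rpow
            (Real.toNNReal x) (Real.toNNReal y) hs1.le
          have hcast := NNReal.coe_le_coe.2 hNN
          push_cast [NNReal.coe_rpow, Real.coe_toNNReal _ hx.le, Real.coe_toNNReal _ hy.le]
            at hcast
          exact hcast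
        have hmain : (k:ℝ) ^ s ≤ c1 * (x ^ s + y ^ s) := by
          rw [← hxy]
          refine h2pow.trans (mul_le_mul_of_nonneg_right ?_ (by positivity))
          have h21 : (2:ℝ) ^ (s - 1) = (2:ℝ) ^ s / 2 := by
            rw [Real.rpow_sub (by norm_num), Real.rpow_one]
          rw [h21, hc1def]; linarith
        have hXpos : (0:ℝ) < x ^ s := Real.rpow_pos_of_pos hx s
        have hYpos : (0:ℝ) < y ^ s := Real.rpow_pos_of_pos hy s
        rw [hwj, hwkj]
        rw [Real.rpow_neg hx.le, Real.rpow_neg hy.le]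
        rw [div_mul_eq_mul_div, le_div_iff₀ hK0]
        calc (x ^ s)⁻¹ * (y ^ s)⁻¹ * (k:ℝ) ^ s
            ≤ (x ^ s)⁻¹ * (y ^ s)⁻¹ * (c1 * (x ^ s + y ^ s)) :=
              mul_le_mul_of_nonneg_left hmain (by positivity)
          _ = c1 * ((x ^ s)⁻¹ + (y ^ s)⁻¹) := by
              linear_combination (c1 * (y ^ s)⁻¹) * mul_inv_cancel₀ hXpos.ne' +
                (c1 * (x ^ s)⁻¹) * mul_inv_cancel₀ hYpos.ne'
      · -- right region: k ≤ j
        have hjk' : (k:ℤ) ≤ j := by omega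
        have hwj : w j = ((j:ℝ)) ^ (-s) := by
          rw [hwdef]; simp only [if_pos h1]
          rw [abs_of_pos (by exact_mod_cast hj : (0:ℝ) < (j:ℝ))]
        have hjle : (k:ℝ) ≤ (j:ℝ) := by exact_mod_cast hjk'
        have hwjle : w j ≤ c1 / (k:ℝ) ^ s := by
          rw [hwj]
          calc ((j:ℝ)) ^ (-s) ≤ ((k:ℝ)) ^ (-s) :=
              Real.rpow_le_rpow_of_nonpos hkr0 hjle (by linarith)
            _ = ((k:ℝ) ^ s)⁻¹ := Real.rpow_neg hkr0.le s
            _ = 1 / (k:ℝ) ^ s := (one_div _).symm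
            _ ≤ c1 / (k:ℝ) ^ s := by gcongr
        calc w j * w (k - j) ≤ (c1 / (k:ℝ) ^ s) * w (k - j) :=
            mul_le_mul_of_nonneg_right hwjle (hw0 _)
          _ ≤ c1 / (k:ℝ) ^ s * (w j + w (k - j)) := by
            apply mul_le_mul_of_nonneg_left _ (by positivity)
            linarith [hw0 j]
    · -- left region: j ≤ 0
      have hj0 : j ≤ 0 := by omega
      have hkj : (k:ℤ) ≤ k - j := by omega
      have hkjpos : (0:ℤ) < k - j := by omega
      have hwkj : w (k - j) = (((k - j : ℤ) : ℝ)) ^ (-s) := by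
        rw [hwdef]; simp only [if_pos h2]
        rw [abs_of_pos (by exact_mod_cast hkjpos : (0:ℝ) < ((k - j : ℤ):ℝ))]
      have hkjle : (k:ℝ) ≤ ((k - j : ℤ) : ℝ) := by exact_mod_cast hkj
      have hwkjle : w (k - j) ≤ c1 / (k:ℝ) ^ s := by
        rw [hwkj]
        calc (((k - j : ℤ):ℝ)) ^ (-s) ≤ ((k:ℝ)) ^ (-s) :=
            Real.rpow_le_rpow_of_nonpos hkr0 hkjle (by linarith)
          _ = ((k:ℝ) ^ s)⁻¹ := Real.rpow_neg hkr0.le s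
          _ = 1 / (k:ℝ) ^ s := (one_div _).symm
          _ ≤ c1 / (k:ℝ) ^ s := by gcongr
      calc w j * w (k - j) ≤ w j * (c1 / (k:ℝ) ^ s) :=
          mul_le_mul_of_nonneg_left hwkjle (hw0 _)
        _ = (c1 / (k:ℝ) ^ s) * w j := by ring
        _ ≤ c1 / (k:ℝ) ^ s * (w j + w (k - j)) := by
          apply mul_le_mul_of_nonneg_left _ (by positivity)
          linarith [hw0 (k - j)]
  -- pointwise bound on the summand
  have hptwise : ∀ j : ℤ, ‖a j * b (k - j)‖ ≤ C₀ ^ 2 * c1 / (k:ℝ) ^ s * (w j + w (k - j)) := by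
    intro j
    calc ‖a j * b (k - j)‖ = ‖a j‖ * ‖b (k - j)‖ := norm_mul _ _
      _ ≤ (C₀ * w j) * (C₀ * w (k - j)) := by
          apply mul_le_mul (hanorm j) (hbnorm _) (norm_nonneg _)
          exact mul_nonneg hC₀ (hw0 _)
      _ = C₀ ^ 2 * (w j * w (k - j)) := by ring
      _ ≤ C₀ ^ 2 * (c1 / (k:ℝ) ^ s * (w j + w (k - j))) := by
          apply mul_le_mul_of_nonneg_left (key j) (by positivity)
      _ = C₀ ^ 2 * c1 / (k:ℝ) ^ s * (w j + w (k - j)) := by ring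
  have hGsum : Summable (fun j : ℤ => C₀ ^ 2 * c1 / (k:ℝ) ^ s * (w j + w (k - j))) :=
    (hsumZ.add hwshift_sum).mul_left _
  have hFsum : Summable (fun j : ℤ => ‖a j * b (k - j)‖) :=
    Summable.of_nonneg_of_le (fun j => norm_nonneg _) hptwise hGsum
  calc ‖∑' j : ℤ, a j * b (k - j)‖ ≤ ∑' j : ℤ, ‖a j * b (k - j)‖ :=
      norm_tsum_le_tsum_norm hFsum
    _ ≤ ∑' j : ℤ, C₀ ^ 2 * c1 / (k:ℝ) ^ s * (w j + w (k - j)) :=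
      Summable.tsum_le_tsum hptwise hFsum hGsum
    _ = C₀ ^ 2 * c1 / (k:ℝ) ^ s * ((∑' j : ℤ, w j) + ∑' j : ℤ, w (k - j)) := by
      rw [tsum_mul_left, Summable.tsum_add hsumZ hwshift_sum]
    _ = C₀ ^ 2 * c1 / (k:ℝ) ^ s * (2 * ∑' j : ℤ, w j) := by
      rw [hwshift_eq]; ring
    _ ≤ C₀ ^ 2 * c1 / (k:ℝ) ^ s * (2 * (2 * ((M:ℝ) ^ (1 - s) / (s - 1)))) := by
      apply mul_le_mul_of_nonneg_left (by linarith) (by positivity)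
    _ = 1 / (k:ℝ) ^ s * (2 * C₀ ^ 2 * ((2:ℝ) ^ s + 1) / ((s - 1) * (M:ℝ) ^ (s - 1))) := by
      have hMrw : (M:ℝ) ^ (1 - s) = ((M:ℝ) ^ (s - 1))⁻¹ := by
        rw [← Real.rpow_neg (by positivity), neg_sub]
      rw [hMrw, hc1def]
      have hMs : ((M:ℝ) ^ (s - 1)) ≠ 0 := by positivity
      have hKs : ((k:ℝ) ^ s) ≠ 0 := ne_of_gt hK0
      have hs10 : s - 1 ≠ 0 := ne_of_gt (by linarith)
      field_simp
end
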